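/- arXiv:2510.18607 — 2 statements merged into one kernel-verified Lean document; each statement's English description precedes it below -/
import Mathlib

section
/- If ℓ and k are distinct lines in ℍ^n at angle π/3 to one another, then the image r_ℓ(k) of k under the reflection of order 2 in ℓ is a line contained in the two-dimensional ℍ-subspace spanned by ℓ and k, it is at angle π/3 to both ℓ and k, and it is the unique line in that subspace with this property. -/
noncomputable section

local notation "ℍ" => Quaternion ℝ

/-- The standard Hermitian form on `ℍⁿ`, conjugate-linear in the first variable and
ℍ-linear in the second: `⟨x,y⟩ = ∑ i, star (x i) * y i`. -/
def qInner {n : ℕ} (x y : Fin n → ℍ) : ℍ := ∑ i, star (x i) * y i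

/-- The norm `|v| = √⟨v,v⟩` on `ℍⁿ`. -/
def qNorm {n : ℕ} (v : Fin n → ℍ) : ℝ := Real.sqrt (qInner v v).re

/-- The ℍ-line `vℍ` spanned by `v` (the set of right scalar multiples of `v`). -/
def lineOf {n : ℕ} (v : Fin n → ℍ) : Set (Fin n → ℍ) := {w | ∃ c : ℍ, w = fun i => v i * c}

/-- `ℓ` and `ℓ'` are at angle `θ ∈ [0, π/2]`: for all nonzero `v ∈ ℓ`, `w ∈ ℓ'`,
`|⟨v,w⟩| = cos θ · |v|·|w|`. -/
def atAngle {n : ℕ} (ℓ ℓ' : Set (Fin n → ℍ)) (θ : ℝ) : Prop :=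
  ∀ v ∈ ℓ, ∀ w ∈ ℓ', v ≠ 0 → w ≠ 0 → ‖qInner v w‖ = Real.cos θ * (qNorm v * qNorm w)

/-- The two-dimensional right ℍ-subspace spanned by `v` and `w`, as a set. -/
def planeOf {n : ℕ} (v w : Fin n → ℍ) : Set (Fin n → ℍ) :=
  {x | ∃ c d : ℍ, x = (fun i => v i * c) + fun i => w i * d}

/-- The reflection of order 2 in the line `αℍ`: `r(v) = v − α·(2/⟨α,α⟩)·⟨α,v⟩`. -/
def reflectIn {n : ℕ} (α : Fin n → ℍ) (v : Fin n → ℍ) : Fin n → ℍ :=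
  fun i => v i - α i * ((2 / qInner α α) * qInner α v)

/-!
The reflection `r = r_v` preserves the Hermitian form and sends `v` to `-v`, so `r(w)` has the same
length as `w` and `|⟨r w, v⟩| = |⟨w, v⟩|`; moreover `⟨r w, w⟩ = |w|² - 2|⟨v,w⟩|²/|v|² = |w|²/2`
is real. For uniqueness write a candidate as `x = vc + wd` and put `A = |v|²`, `B = |w|²`,
`γ = ⟨v,w⟩`, `R = Re(c̄γd)`. Expanding the two angle conditions gives `A|c|² = B|d|² = -2R`, hence
`|c̄γd|² = |c|²|d|²AB/4 = R²`, so `c̄γd = R` is real; then `c̄·(2/A)γd = -|c|²`, i.e.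
`(2/A)γd = -c`, which says exactly `x = r(w)·d`.
-/

lemma Quaternion.eq_coe_re_of_normSq_eq (q : ℍ) (h : Quaternion.normSq q = q.re ^ 2) :
    q = ((q.re : ℝ) : ℍ) := by
  have : Quaternion.normSq (q - ((q.re : ℝ) : ℍ)) = 0 := by
    rw [sub_eq_add_neg, Quaternion.normSq_add, h, ← Quaternion.coe_neg, Quaternion.normSq_coe,
      Quaternion.star_coe, Quaternion.mul_coe_eq_smul, Quaternion.re_smul, smul_eq_mul]
    ring
  exact sub_eq_zero.mp (Quaternion.normSq_eq_zero.mp this)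

lemma Quaternion.normSq_smul_add_mul (r : ℝ) (a b c : ℍ) :
    Quaternion.normSq (r • a + b * c)
      = r ^ 2 * Quaternion.normSq a + Quaternion.normSq b * Quaternion.normSq c
        + 2 * r * (star a * b * c).re := by
  simp only [Quaternion.normSq_def', Quaternion.re_add, Quaternion.imI_add, Quaternion.imJ_add,
    Quaternion.imK_add, Quaternion.re_smul, Quaternion.imI_smul, Quaternion.imJ_smul,
    Quaternion.imK_smul, Quaternion.re_mul, Quaternion.imI_mul, Quaternion.imJ_mul,
    Quaternion.imK_mul, Quaternion.re_star, Quaternion.imI_star, Quaternion.imJ_star,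
    Quaternion.imK_star, smul_eq_mul]
  ring

lemma Quaternion.re_star_mul_mul_star (a b c : ℍ) :
    (star c * star b * a).re = (star a * b * c).re := by
  rw [← Quaternion.re_star (star a * b * c)]
  simp only [star_mul, star_star, mul_assoc]

/-- The uniqueness computation in coordinates: for `A = |v|²`, `B = |w|²`, `γ = ⟨v,w⟩`, the
hypotheses say that `x = vc + wd` is at angle `π/3` to `v` and to `w`, the conclusion that
`x = (w - v·(2/A)γ)d = r_v(w)·d`. -/
lemma Quaternion.smul_mul_eq_neg_of_normSq_eq {A B : ℝ} (hA : 0 < A) (hB : 0 < B) {γ c d : ℍ}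
    (hγ : Quaternion.normSq γ = A * B / 4)
    (h₁ : 4 * Quaternion.normSq (A • c + γ * d) = A * (A * Quaternion.normSq c
      + B * Quaternion.normSq d + 2 * (star c * γ * d).re))
    (h₂ : 4 * Quaternion.normSq (B • d + star γ * c) = B * (A * Quaternion.normSq c
      + B * Quaternion.normSq d + 2 * (star c * γ * d).re)) :
    (2 / A) • γ * d = -c := by
  set R := (star c * γ * d).re
  rw [Quaternion.normSq_smul_add_mul, hγ] at h₁
  rw [Quaternion.normSq_smul_add_mul, Quaternion.normSq_star, hγ,
    Quaternion.re_star_mul_mul_star] at h₂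
  have hR₁ : A * Quaternion.normSq c + 2 * R = 0 := by
    have : A * (A * Quaternion.normSq c + 2 * R) = 0 := by linear_combination h₁ / 3
    exact (mul_eq_zero.mp this).resolve_left hA.ne'
  have hR₂ : B * Quaternion.normSq d + 2 * R = 0 := by
    have : B * (B * Quaternion.normSq d + 2 * R) = 0 := by linear_combination h₂ / 3
    exact (mul_eq_zero.mp this).resolve_left hB.ne'
  have hreal : star c * γ * d = (R : ℍ) := by
    refine Quaternion.eq_coe_re_of_normSq_eq _ ?_
    rw [map_mul, map_mul, Quaternion.normSq_star, hγ]
    linear_combination (hR₁ * (B * Quaternion.normSq d) - 2 * R * hR₂) / 4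
  rcases eq_or_ne c 0 with rfl | hc
  · have hR : R = 0 := by simpa using hR₁
    have hd : d = 0 := by
      rw [hR, mul_zero, add_zero, mul_eq_zero, or_iff_right hB.ne'] at hR₂
      exact Quaternion.normSq_eq_zero.mp hR₂
    simp [hd]
  · refine mul_left_cancel₀ (star_ne_zero.mpr hc) ?_
    rw [smul_mul_assoc, mul_smul_comm, ← mul_assoc, hreal, mul_neg, Quaternion.star_mul_self,
      Quaternion.smul_coe, ← Quaternion.coe_neg]
    congr 1
    field_simp
    linear_combination hR₁

section Vectors

variable {n : ℕ}

lemma qInner_mul_right (v w : Fin n → ℍ) (c : ℍ) :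
    qInner v (fun i => w i * c) = qInner v w * c := by
  simp [qInner, Finset.sum_mul, mul_assoc]

lemma qInner_mul_left (v w : Fin n → ℍ) (c : ℍ) :
    qInner (fun i => v i * c) w = star c * qInner v w := by
  simp [qInner, Finset.mul_sum, star_mul, mul_assoc]

lemma qInner_add_left (x y z : Fin n → ℍ) : qInner (x + y) z = qInner x z + qInner y z := by
  simp [qInner, add_mul, Finset.sum_add_distrib]

lemma qInner_add_right (x y z : Fin n → ℍ) : qInner x (y + z) = qInner x y + qInner x z := by
  simp [qInner, mul_add, Finset.sum_add_distrib]

lemma qInner_sub_left (x y z : Fin n → ℍ) : qInner (x - y) z = qInner x z - qInner y z := by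
  simp [qInner, sub_mul, Finset.sum_sub_distrib]

lemma qInner_sub_right (x y z : Fin n → ℍ) : qInner x (y - z) = qInner x y - qInner x z := by
  simp [qInner, mul_sub, Finset.sum_sub_distrib]

lemma star_qInner (v w : Fin n → ℍ) : star (qInner v w) = qInner w v := by
  simp [qInner, star_sum, star_mul]

lemma qInner_self_eq_sum (v : Fin n → ℍ) :
    qInner v v = ((∑ i, Quaternion.normSq (v i) : ℝ) : ℍ) := by
  rw [qInner, ← Quaternion.algebraMap_def, map_sum]
  exact Finset.sum_congr rfl fun i _ => by rw [Quaternion.star_mul_self, Quaternion.algebraMap_def]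

lemma qInner_self (v : Fin n → ℍ) : qInner v v = ((qNorm v ^ 2 : ℝ) : ℍ) := by
  rw [qNorm, qInner_self_eq_sum, Quaternion.re_coe,
    Real.sq_sqrt (Finset.sum_nonneg fun _ _ => Quaternion.normSq_nonneg)]

lemma qNorm_pos {v : Fin n → ℍ} (hv : v ≠ 0) : 0 < qNorm v := by
  obtain ⟨i, hi⟩ := Function.ne_iff.mp hv
  rw [qNorm, qInner_self_eq_sum, Quaternion.re_coe, Real.sqrt_pos]
  exact Finset.sum_pos' (fun _ _ => Quaternion.normSq_nonneg)
    ⟨i, Finset.mem_univ i, Quaternion.normSq_nonneg.lt_of_ne' (mt Quaternion.normSq_eq_zero.mp hi)⟩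

lemma qNorm_mul (v : Fin n → ℍ) (c : ℍ) : qNorm (fun i => v i * c) = qNorm v * ‖c‖ := by
  have h : qNorm (fun i => v i * c) ^ 2 = (qNorm v * ‖c‖) ^ 2 := by
    apply Quaternion.coe_injective
    rw [← qInner_self, qInner_mul_left, qInner_mul_right, qInner_self, ← mul_assoc,
      ← Quaternion.coe_commutes, mul_assoc, Quaternion.star_mul_self, ← Quaternion.coe_mul,
      Quaternion.normSq_eq_norm_mul_self]
    ring_nf
  exact (sq_eq_sq₀ (Real.sqrt_nonneg _) (mul_nonneg (Real.sqrt_nonneg _) (norm_nonneg c))).mp h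

lemma qInner_neg_right (x y : Fin n → ℍ) : qInner x (-y) = -qInner x y := by
  simp [qInner]

lemma norm_qInner_comm (x y : Fin n → ℍ) : ‖qInner x y‖ = ‖qInner y x‖ := by
  rw [← star_qInner, norm_star]

lemma reflectIn_eq_sub (α x : Fin n → ℍ) :
    reflectIn α x = x - fun i => α i * ((2 / qNorm α ^ 2 : ℝ) • qInner α x) := by
  funext i
  simp only [reflectIn, Pi.sub_apply, qInner_self, ← Quaternion.coe_mul_eq_smul]
  push_cast
  rfl

lemma reflectIn_mul (α x : Fin n → ℍ) (c : ℍ) :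
    reflectIn α (fun i => x i * c) = fun i => reflectIn α x i * c := by
  funext i
  simp only [reflectIn, qInner_mul_right, sub_mul, mul_assoc]

lemma image_reflectIn_lineOf (α x : Fin n → ℍ) :
    reflectIn α '' lineOf x = lineOf (reflectIn α x) := by
  ext y
  constructor
  · rintro ⟨_, ⟨c, rfl⟩, rfl⟩
    exact ⟨c, reflectIn_mul α x c⟩
  · rintro ⟨c, rfl⟩
    exact ⟨_, ⟨c, rfl⟩, reflectIn_mul α x c⟩

lemma reflectIn_self {α : Fin n → ℍ} (hα : α ≠ 0) : reflectIn α α = -α := by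
  have h : (2 / qNorm α ^ 2 : ℝ) • qInner α α = 2 := by
    rw [qInner_self, Quaternion.smul_coe, div_mul_cancel₀ _ (pow_pos (qNorm_pos hα) 2).ne']
    norm_cast
  rw [reflectIn_eq_sub, h]
  funext i
  simp only [Pi.sub_apply, Pi.neg_apply, mul_two]
  abel

lemma qInner_reflectIn_reflectIn {α : Fin n → ℍ} (hα : α ≠ 0) (x y : Fin n → ℍ) :
    qInner (reflectIn α x) (reflectIn α y) = qInner x y := by
  have ht : 2 / qNorm α ^ 2 * qNorm α ^ 2 = 2 := div_mul_cancel₀ _ (pow_pos (qNorm_pos hα) 2).ne'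
  simp only [reflectIn_eq_sub, qInner_sub_left, qInner_sub_right, qInner_mul_left,
    qInner_mul_right, qInner_self, ← star_qInner α x]
  simp only [Quaternion.star_smul, smul_mul_assoc, Quaternion.mul_coe_eq_smul, smul_smul, sub_mul,
    mul_smul_comm, ht]
  module

lemma qNorm_reflectIn {α : Fin n → ℍ} (hα : α ≠ 0) (x : Fin n → ℍ) :
    qNorm (reflectIn α x) = qNorm x := by
  rw [qNorm, qNorm, qInner_reflectIn_reflectIn hα]

lemma reflectIn_ne_zero {α x : Fin n → ℍ} (hα : α ≠ 0) (hx : x ≠ 0) :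
    reflectIn α x ≠ 0 := by
  intro h
  have := qNorm_pos hx
  rw [← qNorm_reflectIn hα, h] at this
  simp [qNorm, qInner, Quaternion.re_zero] at this

lemma qInner_reflectIn_left_axis {α : Fin n → ℍ} (hα : α ≠ 0) (x : Fin n → ℍ) :
    qInner (reflectIn α x) α = -qInner x α := by
  calc qInner (reflectIn α x) α = -qInner (reflectIn α x) (reflectIn α α) := by
        rw [reflectIn_self hα, qInner_neg_right, neg_neg]
    _ = -qInner x α := by rw [qInner_reflectIn_reflectIn hα]

lemma qInner_reflectIn_left_same (α x : Fin n → ℍ) :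
    qInner (reflectIn α x) x = ((qNorm x ^ 2 - 2 * ‖qInner α x‖ ^ 2 / qNorm α ^ 2 : ℝ) : ℍ) := by
  rw [reflectIn_eq_sub, qInner_sub_left, qInner_mul_left, qInner_self, Quaternion.star_smul,
    smul_mul_assoc, Quaternion.star_mul_self, Quaternion.smul_coe, ← Quaternion.coe_sub,
    Quaternion.normSq_eq_norm_mul_self]
  ring_nf

lemma reflectIn_mem_planeOf (α x : Fin n → ℍ) : reflectIn α x ∈ planeOf α x :=
  ⟨-((2 / qNorm α ^ 2 : ℝ) • qInner α x), 1, by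
    funext i
    simp only [reflectIn_eq_sub, Pi.sub_apply, Pi.add_apply, mul_neg, mul_one]
    abel⟩

lemma mem_lineOf_self (v : Fin n → ℍ) : v ∈ lineOf v :=
  ⟨1, funext fun _ => (mul_one _).symm⟩

lemma lineOf_mul (v : Fin n → ℍ) {c : ℍ} (hc : c ≠ 0) :
    lineOf (fun i => v i * c) = lineOf v := by
  ext x
  constructor
  · rintro ⟨d, rfl⟩
    exact ⟨c * d, funext fun _ => mul_assoc _ _ _⟩
  · rintro ⟨d, rfl⟩
    exact ⟨c⁻¹ * d, funext fun _ => by rw [mul_assoc, ← mul_assoc c, mul_inv_cancel₀ hc, one_mul]⟩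

lemma lineOf_subset_planeOf {u v w : Fin n → ℍ} (hu : u ∈ planeOf v w) :
    lineOf u ⊆ planeOf v w := by
  obtain ⟨c, d, rfl⟩ := hu
  rintro _ ⟨e, rfl⟩
  exact ⟨c * e, d * e, funext fun i => by simp only [Pi.add_apply, add_mul, mul_assoc]⟩

lemma atAngle_lineOf_pi_div_three_iff {u v : Fin n → ℍ} (hu : u ≠ 0) (hv : v ≠ 0) :
    atAngle (lineOf u) (lineOf v) (Real.pi / 3) ↔ ‖qInner u v‖ = qNorm u * qNorm v / 2 := by
  rw [atAngle, Real.cos_pi_div_three]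
  refine ⟨fun h => (h u (mem_lineOf_self u) v (mem_lineOf_self v) hu hv).trans (by ring), ?_⟩
  rintro h _ ⟨c, rfl⟩ _ ⟨d, rfl⟩ - -
  rw [qInner_mul_left, qInner_mul_right, qNorm_mul, qNorm_mul, norm_mul, norm_mul, norm_star, h]
  ring

lemma norm_qInner_reflectIn_left_same {α x : Fin n → ℍ} (hα : α ≠ 0)
    (h : ‖qInner α x‖ = qNorm α * qNorm x / 2) :
    ‖qInner (reflectIn α x) x‖ = qNorm (reflectIn α x) * qNorm x / 2 := by
  have hα₀ := (qNorm_pos hα).ne'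
  have hre : qNorm x ^ 2 - 2 * (qNorm α * qNorm x / 2) ^ 2 / qNorm α ^ 2 = qNorm x ^ 2 / 2 := by
    field_simp
    ring
  rw [qInner_reflectIn_left_same, h, hre, qNorm_reflectIn hα, Quaternion.norm_coe,
    Real.norm_of_nonneg (by positivity)]
  ring

lemma eq_reflectIn_mul_of_norm_qInner_eq_half {v w x : Fin n → ℍ} (hv : v ≠ 0)
    (hw : w ≠ 0) (hvw : ‖qInner v w‖ = qNorm v * qNorm w / 2) {c d : ℍ}
    (hx : x = (fun i => v i * c) + fun i => w i * d)
    (hxv : ‖qInner x v‖ = qNorm x * qNorm v / 2) (hxw : ‖qInner x w‖ = qNorm x * qNorm w / 2) :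
    x = fun i => reflectIn v w i * d := by
  set γ := qInner v w
  have hvx : qInner v x = qNorm v ^ 2 • c + γ * d := by
    rw [hx, qInner_add_right, qInner_mul_right, qInner_mul_right, qInner_self,
      Quaternion.coe_mul_eq_smul]
  have hwx : qInner w x = qNorm w ^ 2 • d + star γ * c := by
    rw [hx, qInner_add_right, qInner_mul_right, qInner_mul_right, qInner_self,
      Quaternion.coe_mul_eq_smul, star_qInner, add_comm]
  have hxx : qNorm x ^ 2 = qNorm v ^ 2 * Quaternion.normSq c + qNorm w ^ 2 * Quaternion.normSq d
      + 2 * (star c * γ * d).re := by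
    rw [← Quaternion.re_coe (qNorm x ^ 2), ← qInner_self]
    nth_rewrite 1 [hx]
    rw [qInner_add_left, qInner_mul_left, qInner_mul_left, hvx, hwx]
    simp only [Quaternion.re_add, mul_add, mul_smul_comm, Quaternion.re_smul,
      Quaternion.star_mul_self, Quaternion.re_coe, ← mul_assoc, Quaternion.re_star_mul_mul_star,
      smul_eq_mul]
    ring
  have hsd := Quaternion.smul_mul_eq_neg_of_normSq_eq (pow_pos (qNorm_pos hv) 2)
    (pow_pos (qNorm_pos hw) 2) (by rw [Quaternion.normSq_eq_norm_mul_self, hvw]; ring)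
    (by rw [← hvx, ← hxx, Quaternion.normSq_eq_norm_mul_self, norm_qInner_comm, hxv]; ring)
    (by rw [← hwx, ← hxx, Quaternion.normSq_eq_norm_mul_self, norm_qInner_comm, hxw]; ring)
  rw [hx, reflectIn_eq_sub, neg_eq_iff_eq_neg.mp hsd.symm]
  funext i
  simp only [Pi.add_apply, Pi.sub_apply, sub_mul, mul_assoc, smul_mul_assoc, mul_neg]
  abel

end Vectors

theorem reflection_image_is_unique_third_line_general (n : ℕ) (v w : Fin n → ℍ)
    (hv : v ≠ 0) (hw : w ≠ 0)
    (h : atAngle (lineOf v) (lineOf w) (Real.pi / 3)) :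
    (∃ u : Fin n → ℍ, u ≠ 0 ∧ reflectIn v '' lineOf w = lineOf u) ∧
    reflectIn v '' lineOf w ⊆ planeOf v w ∧
    atAngle (reflectIn v '' lineOf w) (lineOf v) (Real.pi / 3) ∧
    atAngle (reflectIn v '' lineOf w) (lineOf w) (Real.pi / 3) ∧
    (∀ m : Set (Fin n → ℍ), (∃ u : Fin n → ℍ, u ≠ 0 ∧ m = lineOf u) →
      m ⊆ planeOf v w → atAngle m (lineOf v) (Real.pi / 3) →
      atAngle m (lineOf w) (Real.pi / 3) → m = reflectIn v '' lineOf w) := by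
  have hvw := (atAngle_lineOf_pi_div_three_iff hv hw).mp h
  have hu := reflectIn_ne_zero hv hw
  rw [image_reflectIn_lineOf]
  refine ⟨⟨_, hu, rfl⟩, lineOf_subset_planeOf (reflectIn_mem_planeOf v w), ?_, ?_, ?_⟩
  · rw [atAngle_lineOf_pi_div_three_iff hu hv, qInner_reflectIn_left_axis hv, norm_neg,
      norm_qInner_comm, hvw, qNorm_reflectIn hv, mul_comm (qNorm v)]
  · rw [atAngle_lineOf_pi_div_three_iff hu hw]
    exact norm_qInner_reflectIn_left_same hv hvw
  · rintro m ⟨x, hx, rfl⟩ hxvw hxv hxw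
    obtain ⟨c, d, hcd⟩ := hxvw (mem_lineOf_self x)
    have hxd := eq_reflectIn_mul_of_norm_qInner_eq_half hv hw hvw hcd
      ((atAngle_lineOf_pi_div_three_iff hx hv).mp hxv)
      ((atAngle_lineOf_pi_div_three_iff hx hw).mp hxw)
    have hd : d ≠ 0 := by
      rintro rfl
      exact hx (hxd.trans (funext fun _ => mul_zero _))
    rw [hxd, lineOf_mul _ hd]

/-- If `ℓ = vℍ` and `k = wℍ` are distinct lines at angle `π/3`, then `r_ℓ(k)` is a line
contained in the two-dimensional subspace spanned by `ℓ` and `k`, at angle `π/3` to both,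
and it is the unique line in that subspace with this property. -/
theorem reflection_image_is_unique_third_line (n : ℕ) (v w : Fin n → ℍ)
    (hv : v ≠ 0) (hw : w ≠ 0) (hne : lineOf v ≠ lineOf w)
    (h : atAngle (lineOf v) (lineOf w) (Real.pi / 3)) :
    (∃ u : Fin n → ℍ, u ≠ 0 ∧ reflectIn v '' lineOf w = lineOf u) ∧
    reflectIn v '' lineOf w ⊆ planeOf v w ∧
    atAngle (reflectIn v '' lineOf w) (lineOf v) (Real.pi / 3) ∧
    atAngle (reflectIn v '' lineOf w) (lineOf w) (Real.pi / 3) ∧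
    (∀ m : Set (Fin n → ℍ), (∃ u : Fin n → ℍ, u ≠ 0 ∧ m = lineOf u) →
      m ⊆ planeOf v w → atAngle m (lineOf v) (Real.pi / 3) →
      atAngle m (lineOf w) (Real.pi / 3) → m = reflectIn v '' lineOf w) :=
  reflection_image_is_unique_third_line_general n v w hv hw h
end
end

section
/- Let Γ ≤ ℍ^× be a finite subgroup with |Γ| = m and let n ≥ 1. For W = W_n(Γ) the codimension generating function satisfies the polynomial identity ∑_{w ∈ W} t^{codim fix(w)} = ∏_{p=1}^{n} (1 + (p·m − 1)·t) in ℤ[t]. -/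
noncomputable section

local notation "ℍ" => Quaternion ℝ

/-- The fixed subspace `fix(w) = ker(w − 1) = {x | w·x = x}` of a matrix acting on the
right ℍ-vector space `ℍⁿ` by left multiplication, as a right ℍ-subspace
(a submodule over `ℍᵐᵒᵖ`). -/
def fixSpace {n : ℕ} (w : Matrix (Fin n) (Fin n) ℍ) : Submodule ℍᵐᵒᵖ (Fin n → ℍ) where
  carrier := {x | w.mulVec x = x}
  add_mem' := by
    intro a b ha hb
    simp only [Set.mem_setOf_eq] at *
    rw [Matrix.mulVec_add, ha, hb]
  zero_mem' := by simp [Set.mem_setOf_eq]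
  smul_mem' := by
    intro c x hx
    simp only [Set.mem_setOf_eq] at *
    rw [Matrix.mulVec_smul, hx]

/-- `codim fix(w) = n − dim_ℍ fix(w)`. -/
def codimFix {n : ℕ} (w : Matrix (Fin n) (Fin n) ℍ) : ℕ :=
  n - Module.finrank ℍᵐᵒᵖ (fixSpace w)

/-- The permutation matrix of `σ`, acting on column vectors by `(P x) i = x (σ i)`. -/
def permMat {n : ℕ} (σ : Equiv.Perm (Fin n)) : Matrix (Fin n) (Fin n) ℍ :=
  Matrix.of fun i j => if σ i = j then 1 else 0

/-- The quaternionic reflection group `W_n(Γ,Δ)`: the subgroup of `GL_n(ℍ)` generated by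
the permutation matrices together with the diagonal matrices `diag(γ₁,…,γ_n)` with all
`γ i ∈ Γ` and `γ₁γ₂⋯γ_n ∈ Δ`. -/
def Wgrp (n : ℕ) (Γ Δ : Subgroup ℍˣ) : Subgroup (Matrix (Fin n) (Fin n) ℍ)ˣ :=
  Subgroup.closure
    {g | (∃ σ : Equiv.Perm (Fin n), g.val = permMat σ) ∨
      (∃ γ : Fin n → ℍˣ, (∀ i, γ i ∈ Γ) ∧ (List.ofFn γ).prod ∈ Δ ∧
        g.val = Matrix.diagonal fun i => (γ i : ℍ))}

/-!
`W_n(Γ)` consists exactly of the monomial matrices `diag(γ) · P_σ` with `γ ∈ Γⁿ`, `σ ∈ Sₙ`, each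
pair giving a different matrix. Decompose `σ ∈ S_{k+1}` as `(p, τ) ∈ Fin (k+1) × S_k`
(`Equiv.Perm.decomposeFin`). If `σ` fixes `0`, the matrix is block diagonal and the `1 × 1` block
`γ₀` adds `0` or `1` to the codimension according as `γ₀ = 1` or not: summing over `γ₀` gives the
factor `1 + (m - 1) t`. If `σ 0 = q + 1`, a fixed vector satisfies `x₀ = γ₀ x_{q+1}`, so eliminating
`x₀` identifies the fixed space with that of a `k × k` monomial matrix for `τ` whose row `τ⁻¹ q` is
multiplied by `γ₀`, and the codimension drops by one. Right multiplication by a fixed tuple permutes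
`Γᵏ`, so each of the `k` values of `q` contributes `m t` times the sum for `k`. Altogether the sum
for `k + 1` is `1 + ((k + 1) m - 1) t` times the sum for `k`.
-/

open Equiv Matrix

section MonomialMatrix

variable {ι R : Type*} [DecidableEq ι]

def monomialMatrix [Zero R] (γ : ι → R) (σ : Perm ι) : Matrix ι ι R :=
  of fun i j => if σ i = j then γ i else 0

theorem diagonal_eq_monomialMatrix [Zero R] (γ : ι → R) : diagonal γ = monomialMatrix γ 1 :=
  rfl

theorem monomialMatrix_one [Zero R] [One R] :
    monomialMatrix (fun _ => (1 : R)) (1 : Perm ι) = 1 :=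
  rfl

variable [Fintype ι] [Semiring R]

theorem monomialMatrix_mulVec_apply (γ : ι → R) (σ : Perm ι) (x : ι → R) (i : ι) :
    (monomialMatrix γ σ *ᵥ x) i = γ i * x (σ i) := by
  simp [monomialMatrix, mulVec, dotProduct, ite_mul]

theorem monomialMatrix_mul (γ δ : ι → R) (σ τ : Perm ι) :
    monomialMatrix γ σ * monomialMatrix δ τ =
      monomialMatrix (fun i => γ i * δ (σ i)) (τ * σ) := by
  ext i j
  rw [mul_apply, Finset.sum_eq_single (σ i) (fun b _ hb => by simp [monomialMatrix, hb.symm])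
    (by simp)]
  change (if σ i = σ i then γ i else 0) * (if τ (σ i) = j then δ (σ i) else 0) =
    if τ (σ i) = j then γ i * δ (σ i) else 0
  rw [if_pos rfl, mul_ite, mul_zero]

def monomialUnit (γ : ι → Rˣ) (σ : Perm ι) : (Matrix ι ι R)ˣ where
  val := monomialMatrix (fun i => γ i) σ
  inv := monomialMatrix (fun i => ↑(γ (σ⁻¹ i))⁻¹) σ⁻¹
  val_inv := by simpa [monomialMatrix_mul] using monomialMatrix_one
  inv_val := by simpa [monomialMatrix_mul] using monomialMatrix_one

theorem monomialUnit_mul (γ δ : ι → Rˣ) (σ τ : Perm ι) :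
    monomialUnit γ σ * monomialUnit δ τ = monomialUnit (fun i => γ i * δ (σ i)) (τ * σ) :=
  Units.ext (by simp [monomialUnit, monomialMatrix_mul])

theorem monomialUnit_one : monomialUnit (1 : ι → Rˣ) 1 = 1 :=
  Units.ext (by simpa [monomialUnit] using monomialMatrix_one)

theorem monomialUnit_inv (γ : ι → Rˣ) (σ : Perm ι) :
    (monomialUnit γ σ)⁻¹ = monomialUnit (fun i => (γ (σ⁻¹ i))⁻¹) σ⁻¹ :=
  Units.ext rfl

theorem monomialUnit_injective [Nontrivial R] :
    Function.Injective fun p : (ι → Rˣ) × Perm ι => monomialUnit p.1 p.2 := by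
  rintro ⟨γ, σ⟩ ⟨δ, τ⟩ h
  have hval : monomialMatrix (fun i => (γ i : R)) σ = monomialMatrix (fun i => (δ i : R)) τ :=
    congrArg Units.val h
  have entry (i : ι) : (γ i : R) = if τ i = σ i then (δ i : R) else 0 := by
    simpa [monomialMatrix] using congrFun (congrFun hval i) (σ i)
  have hτ (i : ι) : τ i = σ i := by
    by_contra hne
    simpa [hne] using entry i
  refine Prod.ext (funext fun i => Units.ext ?_) (Equiv.ext fun i => (hτ i).symm)
  simpa [hτ i] using entry i

def monomialSubgroup (G : Subgroup Rˣ) : Subgroup (Matrix ι ι R)ˣ where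
  carrier := Set.range fun p : (ι → G) × Perm ι => monomialUnit (fun i => p.1 i) p.2
  one_mem' := ⟨1, by simpa [Pi.one_def] using monomialUnit_one⟩
  mul_mem' := by
    rintro _ _ ⟨⟨γ, σ⟩, rfl⟩ ⟨⟨δ, τ⟩, rfl⟩
    exact ⟨(fun i => γ i * δ (σ i), τ * σ), by simp [monomialUnit_mul]⟩
  inv_mem' := by
    rintro _ ⟨⟨γ, σ⟩, rfl⟩
    exact ⟨(fun i => (γ (σ⁻¹ i))⁻¹, σ⁻¹), by simp [monomialUnit_inv]⟩

theorem finsum_mem_monomialSubgroup [Nontrivial R] (G : Subgroup Rˣ) [Fintype G] {M : Type*}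
    [AddCommMonoid M] (f : (Matrix ι ι R)ˣ → M) :
    ∑ᶠ w ∈ (monomialSubgroup (ι := ι) G : Set (Matrix ι ι R)ˣ), f w =
      ∑ σ : Perm ι, ∑ γ : ι → G, f (monomialUnit (fun i => γ i) σ) := by
  have hinj :
      Function.Injective fun p : (ι → G) × Perm ι => monomialUnit (fun i => (p.1 i : Rˣ)) p.2 :=
    monomialUnit_injective.comp <| Prod.map_injective.mpr
      ⟨fun _ _ h => funext fun i => Subtype.ext (congrFun h i), Function.injective_id⟩
  rw [show (monomialSubgroup (ι := ι) G : Set (Matrix ι ι R)ˣ) = Set.range _ from rfl,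
    finsum_mem_range hinj, finsum_eq_sum_of_fintype, Fintype.sum_prod_type, Finset.sum_comm]

end MonomialMatrix

theorem Wgrp_self_eq_monomialSubgroup (n : ℕ) (Γ : Subgroup ℍˣ) :
    Wgrp n Γ Γ = monomialSubgroup Γ := by
  apply le_antisymm
  · refine (Subgroup.closure_le _).mpr ?_
    rintro g (⟨σ, hσ⟩ | ⟨γ, hγ, -, hg⟩)
    · exact ⟨(1, σ), Units.ext (hσ.trans (by simp [permMat, monomialUnit, monomialMatrix])).symm⟩
    · exact ⟨(fun i => ⟨γ i, hγ i⟩, 1),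
        Units.ext (hg.trans (diagonal_eq_monomialMatrix _)).symm⟩
  · rintro _ ⟨⟨γ, σ⟩, rfl⟩
    have hdiag : monomialUnit (fun i => (γ i : ℍˣ)) 1 ∈ Wgrp n Γ Γ := by
      refine Subgroup.subset_closure (Or.inr ⟨fun i => γ i, fun i => (γ i).2, ?_,
        diagonal_eq_monomialMatrix _⟩)
      exact list_prod_mem fun x hx => by
        obtain ⟨i, rfl⟩ := List.mem_ofFn.mp hx
        exact (γ i).2
    have hperm : monomialUnit 1 σ ∈ Wgrp n Γ Γ :=
      Subgroup.subset_closure (Or.inl ⟨σ, by simp [permMat, monomialUnit, monomialMatrix]⟩)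
    simpa [monomialUnit_mul] using mul_mem hdiag hperm

section FixedSpace

variable {D : Type*} [DivisionRing D]

theorem finrank_mulOpposite_self : Module.finrank Dᵐᵒᵖ D = 1 :=
  (MulOpposite.opLinearEquiv Dᵐᵒᵖ (M := D)).finrank_eq.trans (Module.finrank_self Dᵐᵒᵖ)

instance : Module.Finite Dᵐᵒᵖ D :=
  Module.finite_of_finrank_pos (by rw [finrank_mulOpposite_self]; exact one_pos)

def fixLeftMul (a : D) : Submodule Dᵐᵒᵖ D where
  carrier := {x | a * x = x}
  add_mem' {x y} hx hy := by simp_all [mul_add]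
  zero_mem' := mul_zero a
  smul_mem' c x hx := by
    change a * (x * c.unop) = x * c.unop
    rw [← mul_assoc, hx]

open scoped Classical in
theorem finrank_fixLeftMul (a : D) :
    Module.finrank Dᵐᵒᵖ (fixLeftMul a) = if a = 1 then 1 else 0 := by
  split_ifs with ha
  · have : fixLeftMul a = ⊤ := eq_top_iff.mpr fun x _ => by simp [fixLeftMul, ha]
    rw [this, finrank_top, finrank_mulOpposite_self]
  · have : fixLeftMul a = ⊥ := eq_bot_iff.mpr fun x (hx : a * x = x) => by
      have : (a - 1) * x = 0 := by rw [sub_mul, hx, one_mul, sub_self]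
      simpa [sub_ne_zero.mpr ha] using this
    rw [this, finrank_bot]

end FixedSpace

theorem mem_fixSpace_monomialMatrix {n : ℕ} {γ : Fin n → ℍ} {σ : Perm (Fin n)}
    {x : Fin n → ℍ} : x ∈ fixSpace (monomialMatrix γ σ) ↔ ∀ i, γ i * x (σ i) = x i := by
  simp only [fixSpace, Submodule.mem_mk, AddSubmonoid.mem_mk, AddSubsemigroup.mem_mk,
    Set.mem_ofPred_eq, funext_iff, monomialMatrix_mulVec_apply]

theorem codimFix_add_finrank {n : ℕ} (w : Matrix (Fin n) (Fin n) ℍ) :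
    codimFix w + Module.finrank ℍᵐᵒᵖ (fixSpace w) = n := by
  have : Module.finrank ℍᵐᵒᵖ (fixSpace w) ≤ n :=
    (Submodule.finrank_le _).trans_eq <| by
      simp [Module.finrank_pi_fintype, finrank_mulOpposite_self]
  unfold codimFix
  omega

section DecomposeFin

variable {k : ℕ}

theorem decomposeFin_symm_succ_apply_succ (q : Fin k) (τ : Perm (Fin k)) (j : Fin k) :
    Perm.decomposeFin.symm (q.succ, τ) j.succ = if τ j = q then 0 else (τ j).succ := by
  rw [Perm.decomposeFin_symm_apply_succ]
  split_ifs with h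
  · rw [h, swap_apply_right]
  · exact swap_apply_of_ne_of_ne (Fin.succ_ne_zero _) fun hq => h (Fin.succ_injective _ hq)

theorem finrank_fixSpace_decomposeFin_zero (γ : Fin (k + 1) → ℍ) (τ : Perm (Fin k)) :
    Module.finrank ℍᵐᵒᵖ (fixSpace (monomialMatrix γ (Perm.decomposeFin.symm (0, τ)))) =
      Module.finrank ℍᵐᵒᵖ (fixLeftMul (γ 0)) +
        Module.finrank ℍᵐᵒᵖ (fixSpace (monomialMatrix (fun j => γ j.succ) τ)) := by
  have hfix {x : Fin (k + 1) → ℍ} :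
      x ∈ fixSpace (monomialMatrix γ (Perm.decomposeFin.symm (0, τ))) ↔
        γ 0 * x 0 = x 0 ∧ Fin.tail x ∈ fixSpace (monomialMatrix (fun j => γ j.succ) τ) := by
    simp [mem_fixSpace_monomialMatrix, Fin.forall_fin_succ, Fin.tail]
  let e : fixSpace (monomialMatrix γ (Perm.decomposeFin.symm (0, τ))) ≃ₗ[ℍᵐᵒᵖ]
      fixLeftMul (γ 0) × fixSpace (monomialMatrix (fun j => γ j.succ) τ) :=
    { toFun x := (⟨x.1 0, (hfix.mp x.2).1⟩, ⟨Fin.tail x.1, (hfix.mp x.2).2⟩)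
      invFun p := ⟨Fin.cons p.1.1 p.2.1, hfix.mpr ⟨p.1.2, p.2.2⟩⟩
      map_add' _ _ := rfl
      map_smul' _ _ := rfl
      left_inv x := Subtype.ext (Fin.cons_self_tail x.1)
      right_inv p := by ext <;> simp }
  rw [e.finrank_eq, Module.finrank_prod]

theorem finrank_fixSpace_decomposeFin_succ (γ : Fin (k + 1) → ℍ) (q : Fin k) (τ : Perm (Fin k)) :
    Module.finrank ℍᵐᵒᵖ (fixSpace (monomialMatrix γ (Perm.decomposeFin.symm (q.succ, τ)))) =
      Module.finrank ℍᵐᵒᵖ (fixSpace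
        (monomialMatrix (fun j => γ j.succ * if τ j = q then γ 0 else 1) τ)) := by
  have hfix {x : Fin (k + 1) → ℍ} :
      x ∈ fixSpace (monomialMatrix γ (Perm.decomposeFin.symm (q.succ, τ))) ↔
        γ 0 * x q.succ = x 0 ∧
          Fin.tail x ∈
            fixSpace (monomialMatrix (fun j => γ j.succ * if τ j = q then γ 0 else 1) τ) := by
    simp only [mem_fixSpace_monomialMatrix, Fin.forall_fin_succ,
      Perm.decomposeFin_symm_apply_zero, decomposeFin_symm_succ_apply_succ, Fin.tail]
    refine and_congr_right fun hx0 => forall_congr' fun j => ?_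
    split_ifs with h <;> simp [h, mul_assoc, hx0]
  refine LinearEquiv.finrank_eq
    { toFun x := ⟨Fin.tail x.1, (hfix.mp x.2).2⟩
      invFun y := ⟨Fin.cons (γ 0 * y.1 q) y.1, hfix.mpr ⟨by simp, y.2⟩⟩
      map_add' _ _ := rfl
      map_smul' _ _ := rfl
      left_inv x := Subtype.ext ?_
      right_inv _ := rfl }
  change Fin.cons (γ 0 * x.1 q.succ) (Fin.tail x.1) = x.1
  rw [(hfix.mp x.2).1, Fin.cons_self_tail]

open scoped Classical in
theorem codimFix_decomposeFin_zero (γ : Fin (k + 1) → ℍ) (τ : Perm (Fin k)) :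
    codimFix (monomialMatrix γ (Perm.decomposeFin.symm (0, τ))) =
      codimFix (monomialMatrix (fun j => γ j.succ) τ) + if γ 0 = 1 then 0 else 1 := by
  have h := finrank_fixSpace_decomposeFin_zero γ τ
  have h₁ := codimFix_add_finrank (monomialMatrix γ (Perm.decomposeFin.symm (0, τ)))
  have h₂ := codimFix_add_finrank (monomialMatrix (fun j => γ j.succ) τ)
  rw [finrank_fixLeftMul] at h
  split_ifs at h ⊢ <;> omega

theorem codimFix_decomposeFin_succ (γ : Fin (k + 1) → ℍ) (q : Fin k) (τ : Perm (Fin k)) :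
    codimFix (monomialMatrix γ (Perm.decomposeFin.symm (q.succ, τ))) =
      codimFix (monomialMatrix (fun j => γ j.succ * if τ j = q then γ 0 else 1) τ) + 1 := by
  have h := finrank_fixSpace_decomposeFin_succ γ q τ
  have h₁ := codimFix_add_finrank (monomialMatrix γ (Perm.decomposeFin.symm (q.succ, τ)))
  have h₂ := codimFix_add_finrank
    (monomialMatrix (fun j => γ j.succ * if τ j = q then γ 0 else 1) τ)
  omega

end DecomposeFin

theorem sum_pi_fin_succ {α M : Type*} [Fintype α] [AddCommMonoid M] {k : ℕ}
    (F : (Fin (k + 1) → α) → M) : ∑ γ, F γ = ∑ a, ∑ δ : Fin k → α, F (Fin.cons a δ) := by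
  rw [← (Fin.consEquiv fun _ => α).sum_comp, Fintype.sum_prod_type]
  rfl

theorem sum_pow_ite_eq_one {G R : Type*} [Group G] [Fintype G] [DecidableEq G] [CommRing R]
    (t : R) : ∑ a : G, t ^ (if a = 1 then 0 else 1) = 1 + ((Fintype.card G : R) - 1) * t := by
  rw [Fintype.sum_eq_add_sum_compl 1, if_pos rfl, pow_zero,
    Finset.sum_congr rfl fun a ha => by
      rw [if_neg (Finset.mem_compl.mp ha ∘ Finset.mem_singleton.mpr), pow_one],
    Finset.sum_const, Finset.card_compl, Finset.card_singleton, nsmul_eq_mul,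
    Nat.cast_sub Fintype.card_pos, Nat.cast_one]

section GeneratingFunction

variable (Γ : Subgroup ℍˣ) [Fintype Γ] {R : Type*} [CommRing R] (t : R)

def monomialCodimSum (k : ℕ) : R :=
  ∑ σ : Perm (Fin k), ∑ γ : Fin k → Γ,
    t ^ codimFix (monomialMatrix (fun i => ((γ i : ℍˣ) : ℍ)) σ)

variable {k : ℕ}

theorem sum_codimFix_decomposeFin_zero (τ : Perm (Fin k)) :
    ∑ γ : Fin (k + 1) → Γ,
        t ^ codimFix
          (monomialMatrix (fun i => ((γ i : ℍˣ) : ℍ)) (Perm.decomposeFin.symm (0, τ))) =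
      (1 + ((Fintype.card Γ : R) - 1) * t) *
        ∑ δ : Fin k → Γ, t ^ codimFix (monomialMatrix (fun i => ((δ i : ℍˣ) : ℍ)) τ) := by
  classical
  rw [← sum_pow_ite_eq_one t, Fintype.sum_mul_sum, sum_pi_fin_succ]
  simp only [codimFix_decomposeFin_zero, pow_add, Fin.cons_succ, Fin.cons_zero, Units.val_eq_one,
    OneMemClass.coe_eq_one]
  exact Fintype.sum_congr _ _ fun a => Fintype.sum_congr _ _ fun δ => mul_comm _ _

theorem sum_codimFix_decomposeFin_succ (q : Fin k) (τ : Perm (Fin k)) :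
    ∑ γ : Fin (k + 1) → Γ,
        t ^ codimFix
          (monomialMatrix (fun i => ((γ i : ℍˣ) : ℍ)) (Perm.decomposeFin.symm (q.succ, τ))) =
      Fintype.card Γ * t *
        ∑ δ : Fin k → Γ, t ^ codimFix (monomialMatrix (fun i => ((δ i : ℍˣ) : ℍ)) τ) := by
  have hshift (a : Γ) :
      ∑ δ : Fin k → Γ, t ^ codimFix (monomialMatrix
          (fun j => ((δ j : ℍˣ) : ℍ) * if τ j = q then ((a : ℍˣ) : ℍ) else 1) τ) =
        ∑ δ : Fin k → Γ, t ^ codimFix (monomialMatrix (fun i => ((δ i : ℍˣ) : ℍ)) τ) :=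
    Fintype.sum_equiv (Equiv.mulRight fun j => if τ j = q then a else 1) _ _
      fun δ => by simp [apply_ite]
  simp_rw [sum_pi_fin_succ, codimFix_decomposeFin_succ, Fin.cons_succ, Fin.cons_zero, pow_succ,
    ← Finset.sum_mul, hshift, Finset.sum_const, Finset.card_univ, nsmul_eq_mul]
  ring

theorem monomialCodimSum_succ :
    monomialCodimSum Γ t (k + 1) =
      (1 + (((k : R) + 1) * Fintype.card Γ - 1) * t) * monomialCodimSum Γ t k := by
  rw [monomialCodimSum, monomialCodimSum, ← Perm.decomposeFin.symm.sum_comp,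
    Fintype.sum_prod_type, Fin.sum_univ_succ]
  simp only [sum_codimFix_decomposeFin_zero, sum_codimFix_decomposeFin_succ, ← Finset.mul_sum,
    Finset.sum_const, Finset.card_univ, Fintype.card_fin, nsmul_eq_mul]
  ring

theorem monomialCodimSum_eq_prod (k : ℕ) :
    monomialCodimSum Γ t k = ∏ p ∈ Finset.Icc 1 k, (1 + ((p : R) * Fintype.card Γ - 1) * t) := by
  induction k with
  | zero => simp [monomialCodimSum, codimFix]
  | succ k ih =>
    rw [monomialCodimSum_succ, ih, Finset.prod_Icc_succ_top (Nat.le_add_left 1 k), mul_comm]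
    push_cast
    ring

end GeneratingFunction

open Polynomial in
theorem codim_generating_function_Wn_general (n : ℕ)
    (Γ : Subgroup ℍˣ) (hΓ : (Γ : Set ℍˣ).Finite) (m : ℕ) (hm : Nat.card Γ = m) :
    ∑ᶠ w ∈ (Wgrp n Γ Γ : Set (Matrix (Fin n) (Fin n) ℍ)ˣ),
        (X : ℤ[X]) ^ codimFix (w : (Matrix (Fin n) (Fin n) ℍ)ˣ).val =
      ∏ p ∈ Finset.Icc 1 n, (1 + C ((p : ℤ) * (m : ℤ) - 1) * X) := by
  have : Fintype Γ := @Fintype.ofFinite Γ hΓ.to_subtype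
  subst hm
  rw [Wgrp_self_eq_monomialSubgroup, finsum_mem_monomialSubgroup, Nat.card_eq_fintype_card]
  exact (monomialCodimSum_eq_prod Γ X n).trans (Finset.prod_congr rfl fun p _ => by simp)

open Polynomial in
/-- For `W = W_n(Γ)` with `|Γ| = m`, the codimension generating function is
`∑_{w ∈ W} t^{codim fix(w)} = ∏_{p=1}^{n} (1 + (p·m − 1)·t)` in `ℤ[t]`. -/
theorem codim_generating_function_Wn (n : ℕ) (hn : 1 ≤ n)
    (Γ : Subgroup ℍˣ) (hΓ : (Γ : Set ℍˣ).Finite) (m : ℕ) (hm : Nat.card Γ = m) :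
    ∑ᶠ w ∈ (Wgrp n Γ Γ : Set (Matrix (Fin n) (Fin n) ℍ)ˣ),
        (X : ℤ[X]) ^ codimFix (w : (Matrix (Fin n) (Fin n) ℍ)ˣ).val =
      ∏ p ∈ Finset.Icc 1 n, (1 + C ((p : ℤ) * (m : ℤ) - 1) * X) :=
  codim_generating_function_Wn_general n Γ hΓ m hm
end
end
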